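/- arXiv:math/0303179 — 10 statements merged into one kernel-verified Lean document; each statement's English description precedes it below -/
import Mathlib

section
/- The triple (α₋₁, α₀, α₁) is a ℤ-basis of the lattice S₂(ℤ), and its Gram matrix with respect to B is the Cartan matrix of F: B(α₋₁,α₋₁) = B(α₀,α₀) = B(α₁,α₁) = 2, B(α₋₁,α₀) = B(α₀,α₋₁) = −1, B(α₋₁,α₁) = B(α₁,α₋₁) = 0, and B(α₀,α₁) = B(α₁,α₀) = −2. Hence the root lattice of F, with the bilinear form determined by its Cartan matrix [[2,−1,0],[−1,2,−2],[0,−2,2]], is isometric to S₂(ℤ). -/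
/-- The symmetric bilinear form `B(N,N') = 2bb' - ac' - a'c` on 2×2 matrices. -/
def B (N M : Matrix (Fin 2) (Fin 2) ℤ) : ℤ :=
  2 * N 0 1 * M 0 1 - N 0 0 * M 1 1 - M 0 0 * N 1 1

/-- The simple root `α₋₁` of `F`. -/
def αm : Matrix (Fin 2) (Fin 2) ℤ := !![1, 0; 0, -1]

/-- The simple root `α₀` of `F`. -/
def α0 : Matrix (Fin 2) (Fin 2) ℤ := !![-1, -1; -1, 0]

/-- The simple root `α₁` of `F`. -/
def α1 : Matrix (Fin 2) (Fin 2) ℤ := !![0, 1; 1, 0]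

/-! In the coordinates `x, y, z` of the simple roots, `x • α₋₁ + y • α₀ + z • α₁` is the
symmetric matrix `[[x - y, z - y], [z - y, -x]]`. This triangular change of coordinates is
invertible over `ℤ`, and substituting it into `B` gives the Cartan form. -/

lemma smul_αm_add_smul_α0_add_smul_α1 (x y z : ℤ) :
    x • αm + y • α0 + z • α1 = !![x - y, z - y; z - y, -x] := by
  ext i j
  fin_cases i <;> fin_cases j <;> simp [αm, α0, α1] <;> ring

lemma eq_smul_αm_add_smul_α0_add_smul_α1_of_isSymm {N : Matrix (Fin 2) (Fin 2) ℤ}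
    (hN : N.IsSymm) : N = (-N 1 1) • αm + (-N 1 1 - N 0 0) • α0 +
      (N 0 1 - N 1 1 - N 0 0) • α1 := by
  have hsym : N 1 0 = N 0 1 := hN.apply 0 1
  rw [smul_αm_add_smul_α0_add_smul_α1, Matrix.eta_fin_two N, hsym]
  simp

lemma smul_αm_add_smul_α0_add_smul_α1_injective {x y z x' y' z' : ℤ}
    (h : x • αm + y • α0 + z • α1 = x' • αm + y' • α0 + z' • α1) :
    x = x' ∧ y = y' ∧ z = z' := by
  rw [smul_αm_add_smul_α0_add_smul_α1, smul_αm_add_smul_α0_add_smul_α1] at h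
  have h00 : x - y = x' - y' := congrFun (congrFun h 0) 0
  have h01 : z - y = z' - y' := congrFun (congrFun h 0) 1
  have h11 : -x = -x' := congrFun (congrFun h 1) 1
  omega

/-- `(α₋₁, α₀, α₁)` is a ℤ-basis of the lattice `S₂(ℤ)` of symmetric 2×2 integer
matrices, its Gram matrix with respect to `B` is the Cartan matrix of `F`, and hence
the root lattice of `F` with the bilinear form of the Cartan matrix
`[[2,-1,0],[-1,2,-2],[0,-2,2]]` is isometric to `S₂(ℤ)`. -/
theorem stmt_0 :
    (∀ N : Matrix (Fin 2) (Fin 2) ℤ, N.IsSymm →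
      ∃! c : ℤ × ℤ × ℤ, N = c.1 • αm + c.2.1 • α0 + c.2.2 • α1) ∧
    B αm αm = 2 ∧ B α0 α0 = 2 ∧ B α1 α1 = 2 ∧
    B αm α0 = -1 ∧ B α0 αm = -1 ∧
    B αm α1 = 0 ∧ B α1 αm = 0 ∧
    B α0 α1 = -2 ∧ B α1 α0 = -2 ∧
    (∀ x y z x' y' z' : ℤ,
      B (x • αm + y • α0 + z • α1) (x' • αm + y' • α0 + z' • α1) =
        dotProduct ![x, y, z]
          ((!![2, -1, 0; -1, 2, -2; 0, -2, 2]).mulVec ![x', y', z'])) := by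
  refine ⟨fun N hN => ?_, by decide, by decide, by decide, by decide, by decide, by decide,
    by decide, by decide, by decide, fun x y z x' y' z' => ?_⟩
  · have hN' := eq_smul_αm_add_smul_α0_add_smul_α1_of_isSymm hN
    refine ⟨(-N 1 1, -N 1 1 - N 0 0, N 0 1 - N 1 1 - N 0 0), hN', fun ⟨x, y, z⟩ h => ?_⟩
    obtain ⟨rfl, rfl, rfl⟩ := smul_αm_add_smul_α0_add_smul_α1_injective (h.symm.trans hN')
    rfl
  · rw [smul_αm_add_smul_α0_add_smul_α1, smul_αm_add_smul_α0_add_smul_α1]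
    simp [B, dotProduct, Matrix.mulVec, Fin.sum_univ_three]
    ring
end

section
/- A matrix N ∈ S₂(ℤ) satisfies det N = −1 if and only if there exist A in the subgroup of GL₂(ℤ) generated by r₋₁, r₀, r₁, a sign ε ∈ {1, −1}, and i ∈ {−1, 0, 1} such that N = ε · A αᵢ Aᵀ. In other words, the real roots of F (the Weyl conjugates of the simple roots and their negatives) are exactly the elements of S₂(ℤ) of determinant −1. -/
/-!
Conjugation by the Weyl group preserves the determinant, and so does multiplication by a sign;
the simple roots have determinant `-1`. Conversely, write `N = !![a, b; b, c]` with `ac - b² = -1`.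
The Weyl group contains the translations `T ^ n = !![1, n; 0, 1]` of the modular group and the
swap `r₋₁`, so `N` can be reduced by a Euclidean descent on `|c|`: translating makes
`0 ≤ b < |c|`, after which `ac = b² - 1` forces `|a| < |c|` unless `b = 0`, and swapping `a` and `c`
continues the descent. It ends at `b = 0` (where `N = ±α₋₁`) or at `c = 0` (where `b = ±1` and a
translation brings `N` to `α₁` or `-α₀`, up to conjugation by `r₁`).
-/

open Matrix

/-- The simple reflection `r₋₁` as an element of `GL₂(ℤ)`. -/
def um : GL (Fin 2) ℤ := ⟨!![0, 1; 1, 0], !![0, 1; 1, 0], by decide, by decide⟩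

/-- The simple reflection `r₀` as an element of `GL₂(ℤ)`. -/
def u0 : GL (Fin 2) ℤ := ⟨!![-1, 1; 0, 1], !![-1, 1; 0, 1], by decide, by decide⟩

/-- The simple reflection `r₁` as an element of `GL₂(ℤ)`. -/
def u1 : GL (Fin 2) ℤ := ⟨!![1, 0; 0, -1], !![1, 0; 0, -1], by decide, by decide⟩

open ModularGroup

abbrev weylGroup : Subgroup (GL (Fin 2) ℤ) := Subgroup.closure {um, u0, u1}

lemma um_mem_weylGroup : um ∈ weylGroup := Subgroup.subset_closure (by simp)

lemma u0_mem_weylGroup : u0 ∈ weylGroup := Subgroup.subset_closure (by simp)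

lemma u1_mem_weylGroup : u1 ∈ weylGroup := Subgroup.subset_closure (by simp)

lemma toGL_T_eq : SpecialLinearGroup.toGL T = (u1 * um) ^ 2 * u0 * u1 := by
  ext i j
  fin_cases i <;> fin_cases j <;> rfl

lemma toGL_T_zpow_mem_weylGroup (n : ℤ) : SpecialLinearGroup.toGL (T ^ n) ∈ weylGroup := by
  rw [map_zpow, toGL_T_eq]
  refine zpow_mem (mul_mem (mul_mem (pow_mem ?_ 2) u0_mem_weylGroup) u1_mem_weylGroup) n
  exact mul_mem u1_mem_weylGroup um_mem_weylGroup

def IsRealRoot (N : Matrix (Fin 2) (Fin 2) ℤ) : Prop :=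
  ∃ A ∈ weylGroup, ∃ ε ∈ ({1, -1} : Set ℤ),
    ∃ α ∈ ({αm, α0, α1} : Set (Matrix (Fin 2) (Fin 2) ℤ)),
      N = ε • ((A : Matrix (Fin 2) (Fin 2) ℤ) * α * (A : Matrix (Fin 2) (Fin 2) ℤ)ᵀ)

namespace IsRealRoot

lemma of_mem {α : Matrix (Fin 2) (Fin 2) ℤ} (hα : α ∈ ({αm, α0, α1} : Set _)) :
    IsRealRoot α :=
  ⟨1, one_mem _, 1, by simp, α, hα, by simp⟩

lemma neg {N : Matrix (Fin 2) (Fin 2) ℤ} (h : IsRealRoot N) : IsRealRoot (-N) := by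
  obtain ⟨A, hA, ε, hε, α, hα, rfl⟩ := h
  refine ⟨A, hA, -ε, ?_, α, hα, neg_smul ε _ |>.symm⟩
  rcases hε with rfl | rfl <;> simp

lemma conj {N : Matrix (Fin 2) (Fin 2) ℤ} {B : GL (Fin 2) ℤ} (hB : B ∈ weylGroup)
    (h : IsRealRoot N) :
    IsRealRoot ((B : Matrix (Fin 2) (Fin 2) ℤ) * N * (B : Matrix (Fin 2) (Fin 2) ℤ)ᵀ) := by
  obtain ⟨A, hA, ε, hε, α, hα, rfl⟩ := h
  refine ⟨B * A, mul_mem hB hA, ε, hε, α, hα, ?_⟩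
  simp only [Units.val_mul, transpose_mul, Matrix.mul_smul, Matrix.smul_mul, Matrix.mul_assoc]

lemma det_eq {N : Matrix (Fin 2) (Fin 2) ℤ} (h : IsRealRoot N) : N.det = -1 := by
  obtain ⟨A, -, ε, hε, α, hα, rfl⟩ := h
  have hdet_α : α.det = -1 := by
    rcases hα with rfl | rfl | rfl <;> simp [αm, α0, α1, det_fin_two_of]
  have hdet_A : (A : Matrix (Fin 2) (Fin 2) ℤ).det ^ 2 = 1 := by
    rw [← GeneralLinearGroup.val_det_apply, ← Units.val_pow_eq_pow_val, Int.units_sq, Units.val_one]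
  have hε2 : ε ^ 2 = 1 := by rcases hε with rfl | rfl <;> rfl
  rw [det_smul, det_mul, det_mul, det_transpose, hdet_α, Fintype.card_fin]
  linear_combination (-(A : Matrix (Fin 2) (Fin 2) ℤ).det ^ 2) * hε2 - hdet_A

end IsRealRoot

lemma isRealRoot_conj_iff {N : Matrix (Fin 2) (Fin 2) ℤ} {B : GL (Fin 2) ℤ} (hB : B ∈ weylGroup) :
    IsRealRoot ((B : Matrix (Fin 2) (Fin 2) ℤ) * N * (B : Matrix (Fin 2) (Fin 2) ℤ)ᵀ) ↔
      IsRealRoot N := by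
  refine ⟨fun h => ?_, IsRealRoot.conj hB⟩
  convert h.conj (inv_mem hB) using 1
  simp only [← Matrix.mul_assoc, Units.inv_mul, Matrix.one_mul]
  rw [Matrix.mul_assoc, ← transpose_mul, Units.inv_mul, transpose_one, Matrix.mul_one]

lemma conj_toGL_T_zpow (n a b c : ℤ) :
    (SpecialLinearGroup.toGL (T ^ n) : Matrix (Fin 2) (Fin 2) ℤ) * !![a, b; b, c] *
        (SpecialLinearGroup.toGL (T ^ n) : Matrix (Fin 2) (Fin 2) ℤ)ᵀ =
      !![a + 2 * n * b + n ^ 2 * c, b + n * c; b + n * c, c] := by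
  rw [SpecialLinearGroup.coe_GL_coe_matrix, coe_T_zpow]
  ext i j
  fin_cases i <;> fin_cases j <;> simp [mul_apply, Fin.sum_univ_two] <;> ring

lemma conj_um (a b c : ℤ) :
    (um : Matrix (Fin 2) (Fin 2) ℤ) * !![a, b; b, c] * (um : Matrix (Fin 2) (Fin 2) ℤ)ᵀ =
      !![c, b; b, a] := by
  ext i j
  fin_cases i <;> fin_cases j <;> simp [um, mul_apply, Fin.sum_univ_two]

lemma conj_u1 (a b c : ℤ) :
    (u1 : Matrix (Fin 2) (Fin 2) ℤ) * !![a, b; b, c] * (u1 : Matrix (Fin 2) (Fin 2) ℤ)ᵀ =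
      !![a, -b; -b, c] := by
  ext i j
  fin_cases i <;> fin_cases j <;> simp [u1, mul_apply, Fin.sum_univ_two]

lemma isRealRoot_diagonal {a c : ℤ} (h : a * c = -1) : IsRealRoot !![a, 0; 0, c] := by
  have hα : IsRealRoot αm := .of_mem (by simp)
  rcases Int.eq_one_or_neg_one_of_mul_eq_neg_one h with rfl | rfl
  · obtain rfl : c = -1 := by linarith
    exact hα
  · obtain rfl : c = 1 := by linarith
    simpa [αm] using hα.neg

lemma isRealRoot_of_lowerRight_zero_one (a : ℤ) : IsRealRoot !![a, 1; 1, 0] := by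
  rw [← isRealRoot_conj_iff (toGL_T_zpow_mem_weylGroup (-(a / 2))), conj_toGL_T_zpow]
  have hmod : a + 2 * -(a / 2) * 1 + (-(a / 2)) ^ 2 * 0 = a % 2 := by
    rw [Int.emod_def]; ring
  rw [hmod]
  rcases Int.emod_two_eq a with h | h <;> rw [h]
  · exact .of_mem (by simp [α1])
  · simpa [α0] using (IsRealRoot.of_mem (α := α0) (by simp)).neg

lemma isRealRoot_of_lowerRight_zero (a b : ℤ) (hb : b * b = 1) : IsRealRoot !![a, b; b, 0] := by
  rcases mul_self_eq_one_iff.mp hb with rfl | rfl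
  · exact isRealRoot_of_lowerRight_zero_one a
  · rw [← isRealRoot_conj_iff u1_mem_weylGroup, conj_u1, neg_neg]
    exact isRealRoot_of_lowerRight_zero_one a

lemma natAbs_lt_of_mul_eq_sq_sub_one {a b c : ℤ} (h : a * c = b * b - 1) (hb : 0 < b)
    (hbc : b < |c|) : a.natAbs < c.natAbs := by
  have hprod : |a| * |c| < |c| * |c| := by
    rw [← abs_mul, h, abs_of_nonneg (by nlinarith)]
    nlinarith
  zify
  exact lt_of_mul_lt_mul_right hprod (abs_nonneg c)

theorem isRealRoot_of_det_eq_neg_one (a b c : ℤ) (h : a * c - b * b = -1) :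
    IsRealRoot !![a, b; b, c] := by
  induction hn : c.natAbs using Nat.strong_induction_on generalizing a b c with
  | _ n ih =>
    rcases eq_or_ne c 0 with rfl | hc
    · exact isRealRoot_of_lowerRight_zero a b (by linarith)
    rw [← isRealRoot_conj_iff (toGL_T_zpow_mem_weylGroup (-(b / c))), conj_toGL_T_zpow]
    have hb' : b + -(b / c) * c = b % c := by rw [Int.emod_def]; ring
    have hdet : (a + 2 * -(b / c) * b + (-(b / c)) ^ 2 * c) * c = b % c * (b % c) - 1 := by
      rw [← hb']; linear_combination h
    rw [hb']
    generalize a + 2 * -(b / c) * b + (-(b / c)) ^ 2 * c = a' at hdet ⊢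
    rcases eq_or_ne (b % c) 0 with h0 | h0
    · rw [h0] at hdet ⊢
      exact isRealRoot_diagonal (by linarith)
    have hlt : a'.natAbs < c.natAbs :=
      natAbs_lt_of_mul_eq_sq_sub_one hdet (lt_of_le_of_ne (Int.emod_nonneg b hc) h0.symm)
        (by simpa using Int.emod_lt b hc)
    rw [← isRealRoot_conj_iff um_mem_weylGroup, conj_um]
    exact ih _ (hn ▸ hlt) c (b % c) a' (by linarith) rfl

/-- A symmetric integer 2×2 matrix `N` has `det N = -1` iff `N = ε · A αᵢ Aᵀ` for some
`A` in the subgroup of `GL₂(ℤ)` generated by `r₋₁, r₀, r₁`, some sign `ε ∈ {1,-1}` and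
some simple root `αᵢ`: the real roots of `F` are exactly the elements of `S₂(ℤ)` of
determinant `-1`. -/
theorem stmt_4 (N : Matrix (Fin 2) (Fin 2) ℤ) (hN : N.IsSymm) :
    N.det = -1 ↔
      ∃ A ∈ Subgroup.closure {um, u0, u1}, ∃ ε ∈ ({1, -1} : Set ℤ),
        ∃ α ∈ ({αm, α0, α1} : Set (Matrix (Fin 2) (Fin 2) ℤ)),
          N = ε • ((A : Matrix (Fin 2) (Fin 2) ℤ) * α *
            ((A : Matrix (Fin 2) (Fin 2) ℤ))ᵀ) := by
  refine ⟨fun hdet => ?_, IsRealRoot.det_eq⟩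
  rw [eta_fin_two N, hN.apply 0 1] at hdet ⊢
  rw [det_fin_two_of] at hdet
  exact isRealRoot_of_det_eq_neg_one _ _ _ hdet
end

section
/- For every nonzero N ∈ S₂(ℤ) with det N = 0 there exist a matrix A in the subgroup of GL₂(ℤ) generated by r₋₁, r₀, r₁ and a nonzero integer a such that A N Aᵀ = [[a,0],[0,0]]; moreover the integer a is uniquely determined by N. (Every light-cone root of F is Weyl-equivalent to a unique level 0 light-cone root −a(α₀+α₁).) -/
open Matrix

/-! The reflections generate all of `GL₂(ℤ)`: `r₋₁ r₁ = S` and `(r₋₁ r₁)² r₀ r₁ = T` generate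
`SL₂(ℤ)`, and `r₁` has determinant `-1`. A singular symmetric `N` has a primitive kernel vector
`v`; completing `v` to a unimodular matrix `A` with second row `v` makes `A N Aᵀ` vanish outside
its top-left entry. That entry is an invariant: if `C [[b,0],[0,0]] Cᵀ = [[a,0],[0,0]]` with `C`
unimodular and `b ≠ 0`, then `C₁₀ = 0`, so `C₀₀ = ±1` and `a = C₀₀² b = b`. -/

open MatrixGroups ModularGroup

lemma toGL_S : SpecialLinearGroup.toGL S = um * u1 := by
  ext i j; fin_cases i <;> fin_cases j <;> rfl

lemma toGL_T : SpecialLinearGroup.toGL T = (um * u1) ^ 2 * u0 * u1 := by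
  ext i j; fin_cases i <;> fin_cases j <;> rfl

lemma mem_range_toGL_of_det_eq_one {A : GL (Fin 2) ℤ}
    (h : (A : Matrix (Fin 2) (Fin 2) ℤ).det = 1) :
    A ∈ (SpecialLinearGroup.toGL : SL(2, ℤ) →* GL (Fin 2) ℤ).range :=
  ⟨⟨A, h⟩, Units.ext rfl⟩

lemma closure_um_u0_u1_eq_top : Subgroup.closure {um, u0, u1} = ⊤ := by
  set W := Subgroup.closure {um, u0, u1}
  have hum : um ∈ W := Subgroup.subset_closure (by simp)
  have hu0 : u0 ∈ W := Subgroup.subset_closure (by simp)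
  have hu1 : u1 ∈ W := Subgroup.subset_closure (by simp)
  have hSL : (SpecialLinearGroup.toGL : SL(2, ℤ) →* GL (Fin 2) ℤ).range ≤ W := by
    rw [MonoidHom.range_eq_map, ← SpecialLinearGroup.SL2Z_generators, MonoidHom.map_closure,
      Set.image_pair, toGL_S, toGL_T, Subgroup.closure_le, Set.pair_subset_iff]
    exact ⟨mul_mem hum hu1, mul_mem (mul_mem (pow_mem (mul_mem hum hu1) 2) hu0) hu1⟩
  refine eq_top_iff.mpr fun A _ => ?_
  have hdet : IsUnit (A : Matrix (Fin 2) (Fin 2) ℤ).det := (isUnit_iff_isUnit_det _).mp A.isUnit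
  rcases Int.isUnit_iff.mp hdet with h | h
  · exact hSL (mem_range_toGL_of_det_eq_one h)
  · have hAu1 : A * u1 ∈ W := hSL <| mem_range_toGL_of_det_eq_one <| by
      rw [Units.val_mul, det_mul, h]; decide
    simpa using mul_mem hAu1 (inv_mem hu1)

lemma exists_isCoprime_mulVec_eq_zero {N : Matrix (Fin 2) (Fin 2) ℤ} (hdet : N.det = 0) :
    ∃ x y : ℤ, IsCoprime x y ∧ N *ᵥ ![x, y] = 0 := by
  obtain ⟨v, hv, hNv⟩ := exists_mulVec_eq_zero_iff.mpr hdet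
  have hgcd : 0 < Int.gcd (v 0) (v 1) := by
    refine Int.gcd_pos_iff.mpr ?_
    by_contra! h
    exact hv (by ext i; fin_cases i <;> simp [h.1, h.2])
  obtain ⟨g, x, y, hg, hxy, hx, hy⟩ := Int.exists_gcd_one' hgcd
  refine ⟨x, y, Int.isCoprime_iff_gcd_eq_one.mpr hxy, ?_⟩
  have hvg : v = (g : ℤ) • ![x, y] := by
    ext i; fin_cases i <;> simp [hx, hy, mul_comm]
  rw [hvg, mulVec_smul] at hNv
  exact (smul_eq_zero.mp hNv).resolve_left (by exact_mod_cast hg.ne')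

lemma exists_GL_row_eq_of_isCoprime {x y : ℤ} (h : IsCoprime x y) :
    ∃ A : GL (Fin 2) ℤ, (A : Matrix (Fin 2) (Fin 2) ℤ) 1 = ![x, y] := by
  obtain ⟨u, v, huv⟩ := h
  have hdet : IsUnit (!![v, -u; x, y] : Matrix (Fin 2) (Fin 2) ℤ).det := by
    rw [det_fin_two_of, show v * y - -u * x = 1 by linear_combination huv]
    exact isUnit_one
  exact ⟨nonsingInvUnit _ hdet, by ext j; fin_cases j <;> rfl⟩

lemma mul_mul_transpose_mul {n R : Type*} [Fintype n] [CommSemiring R] (A B N : Matrix n n R) :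
    (A * B) * N * (A * B)ᵀ = A * (B * N * Bᵀ) * Aᵀ := by
  simp only [transpose_mul, mul_assoc]

lemma exists_GL_mul_mul_transpose_eq_diag {N : Matrix (Fin 2) (Fin 2) ℤ} (hsym : N.IsSymm)
    (hne : N ≠ 0) (hdet : N.det = 0) :
    ∃ A : GL (Fin 2) ℤ, ∃ a : ℤ, a ≠ 0 ∧
      (A : Matrix (Fin 2) (Fin 2) ℤ) * N * (A : Matrix (Fin 2) (Fin 2) ℤ)ᵀ = !![a, 0; 0, 0] := by
  obtain ⟨x, y, hxy, hker⟩ := exists_isCoprime_mulVec_eq_zero hdet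
  obtain ⟨A, hA⟩ := exists_GL_row_eq_of_isCoprime hxy
  set M := (A : Matrix (Fin 2) (Fin 2) ℤ) * N * (A : Matrix (Fin 2) (Fin 2) ℤ)ᵀ
  have hcol : ∀ i, M i 1 = 0 := fun i => by
    have : M i 1 = ((A : Matrix (Fin 2) (Fin 2) ℤ) *ᵥ (N *ᵥ ![x, y])) i := by
      rw [← hA, mulVec_mulVec]; rfl
    rw [this, hker, mulVec_zero, Pi.zero_apply]
  have hMsym : M.IsSymm := by
    simp only [M, IsSymm, transpose_mul, transpose_transpose, hsym.eq, mul_assoc]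
  have hM : M = !![M 0 0, 0; 0, 0] := by
    ext i j; fin_cases i <;> fin_cases j
    · rfl
    · exact hcol 0
    · exact (hMsym.apply 1 0).symm.trans (hcol 0)
    · exact hcol 1
  refine ⟨A, M 0 0, fun h0 => hne ?_, hM⟩
  have h := mul_mul_transpose_mul ((A⁻¹ : GL (Fin 2) ℤ) : Matrix (Fin 2) (Fin 2) ℤ) A N
  rw [Units.inv_mul, transpose_one, one_mul, mul_one] at h
  have hM0 : M = 0 := by
    rw [hM, h0]; ext i j; fin_cases i <;> fin_cases j <;> rfl
  rw [h]
  change _ * M * _ = 0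
  rw [hM0, mul_zero, zero_mul]

lemma eq_of_mul_diag_mul_transpose_eq_diag {C : GL (Fin 2) ℤ} {a b : ℤ} (hb : b ≠ 0)
    (h : (C : Matrix (Fin 2) (Fin 2) ℤ) * !![b, 0; 0, 0] * (C : Matrix (Fin 2) (Fin 2) ℤ)ᵀ =
      !![a, 0; 0, 0]) :
    a = b := by
  have hentry : ∀ i j, (!![a, 0; 0, 0] : Matrix (Fin 2) (Fin 2) ℤ) i j = C i 0 * b * C j 0 := by
    intro i j
    rw [← h]
    simp [mul_apply, Fin.sum_univ_two]
  have h11 : C 1 0 * b * C 1 0 = 0 := (hentry 1 1).symm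
  have hC10 : C 1 0 = 0 := by simpa [hb] using h11
  have hC00 : IsUnit (C 0 0) := by
    have hdet : IsUnit (C : Matrix (Fin 2) (Fin 2) ℤ).det := (isUnit_iff_isUnit_det _).mp C.isUnit
    rw [det_fin_two, hC10, mul_zero, sub_zero] at hdet
    exact isUnit_of_mul_isUnit_left hdet
  calc a = C 0 0 * b * C 0 0 := hentry 0 0
    _ = (C 0 0 * C 0 0) * b := by ring
    _ = b := by rw [Int.isUnit_mul_self hC00, one_mul]

lemma eq_of_mul_mul_transpose_eq_diag {N : Matrix (Fin 2) (Fin 2) ℤ} {A B : GL (Fin 2) ℤ}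
    {a b : ℤ} (hb : b ≠ 0)
    (hA : (A : Matrix (Fin 2) (Fin 2) ℤ) * N * (A : Matrix (Fin 2) (Fin 2) ℤ)ᵀ = !![a, 0; 0, 0])
    (hB : (B : Matrix (Fin 2) (Fin 2) ℤ) * N * (B : Matrix (Fin 2) (Fin 2) ℤ)ᵀ = !![b, 0; 0, 0]) :
    a = b := by
  refine eq_of_mul_diag_mul_transpose_eq_diag (C := A * B⁻¹) hb ?_
  rw [← hB, ← mul_mul_transpose_mul, ← Units.val_mul, inv_mul_cancel_right, hA]

/-- Every nonzero symmetric integer 2×2 matrix `N` with `det N = 0` satisfies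
`A N Aᵀ = [[a,0],[0,0]]` for some `A` in the subgroup of `GL₂(ℤ)` generated by
`r₋₁, r₀, r₁` and a unique nonzero integer `a`: every light-cone root of `F` is
Weyl-equivalent to a unique level 0 light-cone root `-a(α₀+α₁)`. -/
theorem stmt_5 (N : Matrix (Fin 2) (Fin 2) ℤ) (hsym : N.IsSymm) (hne : N ≠ 0)
    (hdet : N.det = 0) :
    ∃! a : ℤ, a ≠ 0 ∧ ∃ A ∈ Subgroup.closure {um, u0, u1},
      (A : Matrix (Fin 2) (Fin 2) ℤ) * N * ((A : Matrix (Fin 2) (Fin 2) ℤ))ᵀ =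
        !![a, 0; 0, 0] := by
  obtain ⟨B, b, hb, hB⟩ := exists_GL_mul_mul_transpose_eq_diag hsym hne hdet
  refine ⟨b, ⟨hb, B, closure_um_u0_u1_eq_top ▸ Subgroup.mem_top B, hB⟩, ?_⟩
  rintro a ⟨-, A, -, hA⟩
  exact eq_of_mul_mul_transpose_eq_diag hb hA hB
end

section
/- Every matrix A in the subgroup of GL₂(ℤ) generated by r₀ and r₁ satisfies (A N Aᵀ)₂₂ = N₂₂ for all N ∈ S₂(ℤ), i.e. the affine Weyl group preserves the level (the bottom-right entry). Moreover, for every N = [[a,b],[b,1]] ∈ S₂(ℤ) there exists A in this subgroup with A N Aᵀ = [[a − b², 0],[0,1]]; that is, every level 1 element is equivalent under the affine Weyl group to one of the form [[a′,0],[0,1]] with a′ = det N. -/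
open Matrix

def g : GL (Fin 2) ℤ := u1 * u0
def h : GL (Fin 2) ℤ := u0 * u1

lemma g_val : (g : Matrix (Fin 2) (Fin 2) ℤ) = !![-1, 1; 0, -1] := by
  show (u1 : Matrix (Fin 2) (Fin 2) ℤ) * (u0 : Matrix (Fin 2) (Fin 2) ℤ) = _
  simp [u0, u1]

lemma h_val : (h : Matrix (Fin 2) (Fin 2) ℤ) = !![-1, -1; 0, -1] := by
  show (u0 : Matrix (Fin 2) (Fin 2) ℤ) * (u1 : Matrix (Fin 2) (Fin 2) ℤ) = _
  simp [u0, u1]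

lemma g_step (a b : ℤ) :
    (g : Matrix (Fin 2) (Fin 2) ℤ) * !![a, b; b, 1] * (g : Matrix (Fin 2) (Fin 2) ℤ)ᵀ
      = !![a - 2*b + 1, b - 1; b - 1, 1] := by
  have ht : (!![-1, 1; 0, -1] : Matrix (Fin 2) (Fin 2) ℤ)ᵀ = !![-1, 0; 1, -1] := by decide
  rw [g_val, ht]
  ext i j
  fin_cases i <;> fin_cases j <;> simp [Matrix.mul_apply, Fin.sum_univ_two] <;> ring

lemma h_step (a b : ℤ) :
    (h : Matrix (Fin 2) (Fin 2) ℤ) * !![a, b; b, 1] * (h : Matrix (Fin 2) (Fin 2) ℤ)ᵀ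
      = !![a + 2*b + 1, b + 1; b + 1, 1] := by
  have ht : (!![-1, -1; 0, -1] : Matrix (Fin 2) (Fin 2) ℤ)ᵀ = !![-1, 0; -1, -1] := by decide
  rw [h_val, ht]
  ext i j
  fin_cases i <;> fin_cases j <;> simp [Matrix.mul_apply, Fin.sum_univ_two] <;> ring

lemma g_pow (n : ℕ) (a b : ℤ) :
    ((g ^ n : GL (Fin 2) ℤ) : Matrix (Fin 2) (Fin 2) ℤ) * !![a, b; b, 1] *
      ((g ^ n : GL (Fin 2) ℤ) : Matrix (Fin 2) (Fin 2) ℤ)ᵀ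
      = !![a - b^2 + (b - n)^2, b - n; b - n, 1] := by
  induction n with
  | zero =>
      simp only [pow_zero, Units.val_one, Matrix.one_mul, Matrix.transpose_one,
        Matrix.mul_one, Nat.cast_zero]
      congr 1 <;> ring_nf
  | succ n ih =>
      have e : (g ^ (n+1) : GL (Fin 2) ℤ) = g * g ^ n := by rw [pow_succ']
      rw [e, Units.val_mul, Matrix.transpose_mul]
      have assoc : (g : Matrix (Fin 2) (Fin 2) ℤ) * ((g^n : GL (Fin 2) ℤ) : Matrix (Fin 2) (Fin 2) ℤ) * !![a, b; b, 1] * (((g^n : GL (Fin 2) ℤ) : Matrix (Fin 2) (Fin 2) ℤ)ᵀ * (g : Matrix (Fin 2) (Fin 2) ℤ)ᵀ)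
          = (g : Matrix (Fin 2) (Fin 2) ℤ) * (((g^n : GL (Fin 2) ℤ) : Matrix (Fin 2) (Fin 2) ℤ) * !![a, b; b, 1] * ((g^n : GL (Fin 2) ℤ) : Matrix (Fin 2) (Fin 2) ℤ)ᵀ) * (g : Matrix (Fin 2) (Fin 2) ℤ)ᵀ := by
        simp only [Matrix.mul_assoc]
      rw [assoc, ih, g_step]
      congr 1 <;> push_cast <;> ring

lemma h_pow (n : ℕ) (a b : ℤ) :
    ((h ^ n : GL (Fin 2) ℤ) : Matrix (Fin 2) (Fin 2) ℤ) * !![a, b; b, 1] *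
      ((h ^ n : GL (Fin 2) ℤ) : Matrix (Fin 2) (Fin 2) ℤ)ᵀ
      = !![a - b^2 + (b + n)^2, b + n; b + n, 1] := by
  induction n with
  | zero =>
      simp only [pow_zero, Units.val_one, Matrix.one_mul, Matrix.transpose_one,
        Matrix.mul_one, Nat.cast_zero]
      congr 1 <;> ring_nf
  | succ n ih =>
      have e : (h ^ (n+1) : GL (Fin 2) ℤ) = h * h ^ n := by rw [pow_succ']
      rw [e, Units.val_mul, Matrix.transpose_mul]
      have assoc : (h : Matrix (Fin 2) (Fin 2) ℤ) * ((h^n : GL (Fin 2) ℤ) : Matrix (Fin 2) (Fin 2) ℤ) * !![a, b; b, 1] * (((h^n : GL (Fin 2) ℤ) : Matrix (Fin 2) (Fin 2) ℤ)ᵀ * (h : Matrix (Fin 2) (Fin 2) ℤ)ᵀ)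
          = (h : Matrix (Fin 2) (Fin 2) ℤ) * (((h^n : GL (Fin 2) ℤ) : Matrix (Fin 2) (Fin 2) ℤ) * !![a, b; b, 1] * ((h^n : GL (Fin 2) ℤ) : Matrix (Fin 2) (Fin 2) ℤ)ᵀ) * (h : Matrix (Fin 2) (Fin 2) ℤ)ᵀ := by
        simp only [Matrix.mul_assoc]
      rw [assoc, ih, h_step]
      congr 1 <;> push_cast <;> ring
/-- The affine Weyl group (the subgroup of `GL₂(ℤ)` generated by `r₀` and `r₁`)
preserves the level (the bottom-right entry) of every symmetric integer matrix, and
every level 1 element `[[a,b],[b,1]]` is equivalent under it to `[[a-b²,0],[0,1]]`,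
whose upper-left entry is `det N`. -/
theorem stmt_6 :
    (∀ A ∈ Subgroup.closure {u0, u1}, ∀ N : Matrix (Fin 2) (Fin 2) ℤ, N.IsSymm →
      ((A : Matrix (Fin 2) (Fin 2) ℤ) * N * ((A : Matrix (Fin 2) (Fin 2) ℤ))ᵀ) 1 1 =
        N 1 1) ∧
    (∀ a b : ℤ, ∃ A ∈ Subgroup.closure {u0, u1},
      (A : Matrix (Fin 2) (Fin 2) ℤ) * !![a, b; b, 1] *
        ((A : Matrix (Fin 2) (Fin 2) ℤ))ᵀ = !![a - b ^ 2, 0; 0, 1]) := by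
  have hu0 : u0 ∈ Subgroup.closure {u0, u1} :=
    Subgroup.subset_closure (Set.mem_insert _ _)
  have hu1 : u1 ∈ Subgroup.closure {u0, u1} :=
    Subgroup.subset_closure (Set.mem_insert_of_mem _ rfl)
  constructor
  · intro A hA
    induction hA using Subgroup.closure_induction with
    | mem x hx =>
        intro N _
        rcases hx with rfl | rfl <;>
          simp [u0, u1, Matrix.mul_apply, Fin.sum_univ_two, Matrix.vecMul,
            Matrix.vecHead, Matrix.vecTail, dotProduct]
    | one => intro N _; simp
    | mul x y _ _ px py =>
        intro N hN
        have hsymm : (((y : Matrix (Fin 2) (Fin 2) ℤ)) * N * ((y : Matrix (Fin 2) (Fin 2) ℤ))ᵀ).IsSymm := by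
          unfold Matrix.IsSymm
          rw [Matrix.transpose_mul, Matrix.transpose_mul, Matrix.transpose_transpose,
            hN.eq, Matrix.mul_assoc]
        have := px ((y : Matrix (Fin 2) (Fin 2) ℤ) * N * ((y : Matrix (Fin 2) (Fin 2) ℤ))ᵀ) hsymm
        rw [Units.val_mul, Matrix.transpose_mul]
        calc ((x : Matrix (Fin 2) (Fin 2) ℤ) * (y : Matrix (Fin 2) (Fin 2) ℤ) * N *
              (((y : Matrix (Fin 2) (Fin 2) ℤ))ᵀ * ((x : Matrix (Fin 2) (Fin 2) ℤ))ᵀ)) 1 1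
            = ((x : Matrix (Fin 2) (Fin 2) ℤ) *
                ((y : Matrix (Fin 2) (Fin 2) ℤ) * N * ((y : Matrix (Fin 2) (Fin 2) ℤ))ᵀ) *
                ((x : Matrix (Fin 2) (Fin 2) ℤ))ᵀ) 1 1 := by
              simp only [Matrix.mul_assoc]
          _ = _ := by rw [this, py N hN]
    | inv x _ px =>
        intro N hN
        have hsymm : (((x⁻¹ : GL (Fin 2) ℤ) : Matrix (Fin 2) (Fin 2) ℤ) * N *
            (((x⁻¹ : GL (Fin 2) ℤ) : Matrix (Fin 2) (Fin 2) ℤ))ᵀ).IsSymm := by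
          unfold Matrix.IsSymm
          rw [Matrix.transpose_mul, Matrix.transpose_mul, Matrix.transpose_transpose,
            hN.eq, Matrix.mul_assoc]
        have key := px _ hsymm
        have hx : (x : Matrix (Fin 2) (Fin 2) ℤ) *
            (((x⁻¹ : GL (Fin 2) ℤ) : Matrix (Fin 2) (Fin 2) ℤ) * N *
              (((x⁻¹ : GL (Fin 2) ℤ) : Matrix (Fin 2) (Fin 2) ℤ))ᵀ) *
            ((x : Matrix (Fin 2) (Fin 2) ℤ))ᵀ = N := by
          have h1 : (x : Matrix (Fin 2) (Fin 2) ℤ) *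
              ((x⁻¹ : GL (Fin 2) ℤ) : Matrix (Fin 2) (Fin 2) ℤ) = 1 := by
            rw [← Units.val_mul, mul_inv_cancel, Units.val_one]
          have h2 : (((x⁻¹ : GL (Fin 2) ℤ) : Matrix (Fin 2) (Fin 2) ℤ))ᵀ *
              ((x : Matrix (Fin 2) (Fin 2) ℤ))ᵀ = 1 := by
            rw [← Matrix.transpose_mul, ← Units.val_mul, mul_inv_cancel, Units.val_one,
              Matrix.transpose_one]
          calc (x : Matrix (Fin 2) (Fin 2) ℤ) *
              (((x⁻¹ : GL (Fin 2) ℤ) : Matrix (Fin 2) (Fin 2) ℤ) * N *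
                (((x⁻¹ : GL (Fin 2) ℤ) : Matrix (Fin 2) (Fin 2) ℤ))ᵀ) *
              ((x : Matrix (Fin 2) (Fin 2) ℤ))ᵀ
              = ((x : Matrix (Fin 2) (Fin 2) ℤ) *
                  ((x⁻¹ : GL (Fin 2) ℤ) : Matrix (Fin 2) (Fin 2) ℤ)) * N *
                  ((((x⁻¹ : GL (Fin 2) ℤ) : Matrix (Fin 2) (Fin 2) ℤ))ᵀ *
                    ((x : Matrix (Fin 2) (Fin 2) ℤ))ᵀ) := by
                simp only [Matrix.mul_assoc]
            _ = N := by rw [h1, h2, Matrix.one_mul, Matrix.mul_one]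
        rw [hx] at key
        exact key.symm
  · intro a b
    have hg : g ∈ Subgroup.closure {u0, u1} := mul_mem hu1 hu0
    have hh : h ∈ Subgroup.closure {u0, u1} := mul_mem hu0 hu1
    rcases le_or_gt 0 b with hb | hb
    · refine ⟨g ^ b.toNat, pow_mem hg _, ?_⟩
      rw [g_pow]
      rw [Int.toNat_of_nonneg hb]
      norm_num
    · refine ⟨h ^ (-b).toNat, pow_mem hh _, ?_⟩
      rw [h_pow]
      rw [Int.toNat_of_nonneg (by omega : (0:ℤ) ≤ -b)]
      norm_num
end

section
/- Fix an integer m ≥ 1 and a sign ±, and set β₀ = α₋₁, β₁ = m(α₀ + α₁) ± α₁. For every integer k with 0 ≤ k ≤ m, both β₀ + kβ₁ and β₁ + kβ₀ have determinant k(m−k) − 1 ≥ −1 and therefore lie in Φ, whereas β₀ + (m+1)β₁ and β₁ + (m+1)β₀ have determinant −m−2 < −1 and do not lie in Φ. (Thus the β₀-string through β₁ and the β₁-string through β₀ in Φ terminate exactly as required by the Serre relations for the Cartan matrix [[2,−m],[−m,2]].) -/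
open Matrix

/-- The set of roots `Φ` of `F`. -/
def Phi : Set (Matrix (Fin 2) (Fin 2) ℤ) :=
  {N | N.IsSymm ∧ N ≠ 0 ∧ -1 ≤ N.det}

lemma isSymm_of' (a b c : ℤ) : (!![a, b; b, c]).IsSymm := by
  unfold Matrix.IsSymm
  ext i j
  fin_cases i <;> fin_cases j <;> simp

lemma ne_zero_of' (a b c : ℤ) (h : c ≠ 0) : (!![a, b; b, c]) ≠ 0 := fun H => by
  have := congrFun (congrFun H 1) 1
  simp at this
  exact h this

/-- Root strings for the simple-root data of `H(m)`: with `β₀ = α₋₁` and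
`β₁ = m(α₀+α₁) ± α₁`, for `0 ≤ k ≤ m` both `β₀ + kβ₁` and `β₁ + kβ₀` have determinant
`k(m-k) - 1 ≥ -1` and lie in `Φ`, whereas `β₀ + (m+1)β₁` and `β₁ + (m+1)β₀` have
determinant `-m-2 < -1` and do not lie in `Φ`. -/
theorem stmt_9 (m : ℤ) (hm : 1 ≤ m) (ε : ℤ) (hε : ε = 1 ∨ ε = -1)
    (β₀ β₁ : Matrix (Fin 2) (Fin 2) ℤ)
    (hβ₀ : β₀ = αm) (hβ₁ : β₁ = m • (α0 + α1) + ε • α1) :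
    (∀ k : ℤ, 0 ≤ k → k ≤ m →
      (β₀ + k • β₁).det = k * (m - k) - 1 ∧ -1 ≤ (β₀ + k • β₁).det ∧
        β₀ + k • β₁ ∈ Phi ∧
      (β₁ + k • β₀).det = k * (m - k) - 1 ∧ -1 ≤ (β₁ + k • β₀).det ∧
        β₁ + k • β₀ ∈ Phi) ∧
    (β₀ + (m + 1) • β₁).det = -m - 2 ∧ (β₀ + (m + 1) • β₁).det < -1 ∧
      β₀ + (m + 1) • β₁ ∉ Phi ∧
    (β₁ + (m + 1) • β₀).det = -m - 2 ∧ (β₁ + (m + 1) • β₀).det < -1 ∧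
      β₁ + (m + 1) • β₀ ∉ Phi := by
  have hε2 : ε * ε = 1 := by rcases hε with h | h <;> simp [h]
  have hεne : ε ≠ 0 := by rcases hε with h | h <;> simp [h]
  have key : ∀ k : ℤ, β₀ + k • β₁ = !![1 - k*m, k*ε; k*ε, -1] ∧
      β₁ + k • β₀ = !![k - m, ε; ε, -k] := by
    intro k
    subst hβ₀ hβ₁
    constructor <;> (ext i j; fin_cases i <;> fin_cases j <;> simp [αm, α0, α1] <;> ring)
  have det1 : ∀ k : ℤ, (β₀ + k • β₁).det = k * (m - k) - 1 := by
    intro k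
    rw [(key k).1, Matrix.det_fin_two_of]
    nlinarith [hε2]
  have det2 : ∀ k : ℤ, (β₁ + k • β₀).det = k * (m - k) - 1 := by
    intro k
    rw [(key k).2, Matrix.det_fin_two_of]
    nlinarith [hε2]
  refine ⟨fun k hk0 hkm => ?_, ?_, ?_, ?_, ?_, ?_, ?_⟩
  · have hge : -1 ≤ k * (m - k) - 1 := by nlinarith
    refine ⟨det1 k, by rw [det1 k]; exact hge, ⟨?_, ?_, by rw [det1 k]; exact hge⟩,
      det2 k, by rw [det2 k]; exact hge, ⟨?_, ?_, by rw [det2 k]; exact hge⟩⟩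
    · rw [(key k).1]; exact isSymm_of' _ _ _
    · rw [(key k).1]; exact ne_zero_of' _ _ _ (by norm_num)
    · rw [(key k).2]; exact isSymm_of' _ _ _
    · rw [(key k).2]
      intro H
      have := congrFun (congrFun H 0) 1
      simp at this
      exact hεne this
  · rw [det1]; ring
  · rw [det1]; nlinarith
  · intro ⟨_, _, h⟩; rw [det1] at h; nlinarith
  · rw [det2]; ring
  · rw [det2]; nlinarith
  · intro ⟨_, _, h⟩; rw [det2] at h; nlinarith
end

section
/- Let δ = α₀ + α₁ = [[−1,0],[0,0]]. Then B(δ,δ) = 0, B(δ,α₀) = B(δ,α₁) = 0, and B(δ,α₋₁) = −1. Fix an integer m ≥ 1 and set γ₋₁ = α₋₁, γ₀ = (m−1)δ + α₀ = [[−m,−1],[−1,0]], γ₁ = α₁. Then γ₋₁, γ₀, γ₁ are positive real roots of F, the difference γᵢ − γⱼ does not lie in Φ for any i ≠ j, and the Gram matrix [B(γᵢ,γⱼ)] equals [[2,−m,0],[−m,2,−2],[0,−2,2]]. (These are the simple-root data of a rank 3 indefinite Kac–Moody subalgebra of F, inequivalent for different m ≥ 2.) -/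
open Matrix

/-- The minimal null root `δ = α₀ + α₁` of the affine subalgebra `F₀`. -/
def δ : Matrix (Fin 2) (Fin 2) ℤ := α0 + α1

/-- `N` is a positive root of `F`. -/
def IsPositiveRoot (N : Matrix (Fin 2) (Fin 2) ℤ) : Prop :=
  N ≠ 0 ∧ ∃ x y z : ℕ, N = (x : ℤ) • αm + (y : ℤ) • α0 + (z : ℤ) • α1

/-- `N` is a positive real root of `F`. -/
def IsPositiveRealRoot (N : Matrix (Fin 2) (Fin 2) ℤ) : Prop :=
  IsPositiveRoot N ∧ N.det = -1

lemma hδ_eq : δ = !![-1, 0; 0, 0] := by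
  show α0 + α1 = _
  ext i j
  fin_cases i <;> fin_cases j <;> simp [α0, α1]

/-- `δ = α₀+α₁ = [[-1,0],[0,0]]` satisfies `B(δ,δ) = B(δ,α₀) = B(δ,α₁) = 0` and
`B(δ,α₋₁) = -1`; for `m ≥ 1` the elements `γ₋₁ = α₋₁`, `γ₀ = (m-1)δ + α₀ =
[[-m,-1],[-1,0]]`, `γ₁ = α₁` are positive real roots of `F`, no difference of two of
them lies in `Φ`, and their Gram matrix is `[[2,-m,0],[-m,2,-2],[0,-2,2]]`: the
simple-root data of a rank 3 indefinite Kac–Moody subalgebra of `F`. -/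
theorem stmt_10 (m : ℤ) (hm : 1 ≤ m)
    (γm γ0 γ1 : Matrix (Fin 2) (Fin 2) ℤ)
    (hγm : γm = αm) (hγ0 : γ0 = (m - 1) • δ + α0) (hγ1 : γ1 = α1) :
    δ = !![-1, 0; 0, 0] ∧
    B δ δ = 0 ∧ B δ α0 = 0 ∧ B δ α1 = 0 ∧ B δ αm = -1 ∧
    γ0 = !![-m, -1; -1, 0] ∧
    IsPositiveRealRoot γm ∧ IsPositiveRealRoot γ0 ∧ IsPositiveRealRoot γ1 ∧
    γm - γ0 ∉ Phi ∧ γ0 - γm ∉ Phi ∧ γm - γ1 ∉ Phi ∧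
    γ1 - γm ∉ Phi ∧ γ0 - γ1 ∉ Phi ∧ γ1 - γ0 ∉ Phi ∧
    B γm γm = 2 ∧ B γm γ0 = -m ∧ B γm γ1 = 0 ∧
    B γ0 γm = -m ∧ B γ0 γ0 = 2 ∧ B γ0 γ1 = -2 ∧
    B γ1 γm = 0 ∧ B γ1 γ0 = -2 ∧ B γ1 γ1 = 2 := by
  subst hγm hγ1
  have hg0 : γ0 = !![-m, -1; -1, 0] := by
    rw [hγ0, hδ_eq]
    ext i j
    fin_cases i <;> fin_cases j <;> simp [α0, Matrix.smul_apply] <;> ring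
  subst hg0
  have h00 : (!![-m, -1; -1, 0] : Matrix (Fin 2) (Fin 2) ℤ) 0 0 = -m := rfl
  refine ⟨hδ_eq, by simp [B, hδ_eq], by simp [B, hδ_eq, α0],
    by simp [B, hδ_eq, α1], by simp [B, hδ_eq, αm], rfl, ?_, ?_, ?_, ?_, ?_, ?_, ?_, ?_, ?_,
    ?_, ?_, ?_, ?_, ?_, ?_, ?_, ?_, ?_⟩
  · exact ⟨⟨by decide, 1, 0, 0, by ext i j; fin_cases i <;> fin_cases j <;> simp [αm, α0, α1]⟩,
      by decide⟩
  · refine ⟨⟨?_, 0, m.toNat, (m - 1).toNat, ?_⟩, ?_⟩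
    · intro h
      have := congrFun (congrFun h 0) 1
      simp at this
    · have h1 : ((m.toNat : ℤ)) = m := Int.toNat_of_nonneg (by omega)
      have h2 : (((m - 1).toNat : ℤ)) = m - 1 := Int.toNat_of_nonneg (by omega)
      rw [h1, h2]
      ext i j
      fin_cases i <;> fin_cases j <;> simp [αm, α0, α1, Matrix.smul_apply] <;> ring
    · simp [Matrix.det_fin_two_of]
  · exact ⟨⟨by decide, 0, 0, 1, by ext i j; fin_cases i <;> fin_cases j <;> simp [αm, α0, α1]⟩,
      by decide⟩
  · rintro ⟨-, -, hd⟩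
    rw [show αm - !![-m, -1; -1, 0] = !![1 + m, 1; 1, -1] from by
      ext i j; fin_cases i <;> fin_cases j <;> simp [αm] <;> ring] at hd
    simp [Matrix.det_fin_two_of] at hd; omega
  · rintro ⟨-, -, hd⟩
    rw [show !![-m, -1; -1, 0] - αm = !![-m - 1, -1; -1, 1] from by
      ext i j; fin_cases i <;> fin_cases j <;> simp [αm] <;> ring] at hd
    simp [Matrix.det_fin_two_of] at hd; omega
  · rintro ⟨-, -, hd⟩
    rw [show αm - α1 = !![1, -1; -1, -1] from by
      ext i j; fin_cases i <;> fin_cases j <;> simp [αm, α1]] at hd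
    simp [Matrix.det_fin_two_of] at hd
  · rintro ⟨-, -, hd⟩
    rw [show α1 - αm = !![-1, 1; 1, 1] from by
      ext i j; fin_cases i <;> fin_cases j <;> simp [αm, α1]] at hd
    simp [Matrix.det_fin_two_of] at hd
  · rintro ⟨-, -, hd⟩
    rw [show !![-m, -1; -1, 0] - α1 = !![-m, -2; -2, 0] from by
      ext i j; fin_cases i <;> fin_cases j <;> simp [α1]] at hd
    simp [Matrix.det_fin_two_of] at hd
  · rintro ⟨-, -, hd⟩
    rw [show α1 - !![-m, -1; -1, 0] = !![m, 2; 2, 0] from by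
      ext i j; fin_cases i <;> fin_cases j <;> simp [α1]] at hd
    simp [Matrix.det_fin_two_of] at hd
  · decide
  · simp [B, αm]
  · decide
  · simp [B, αm]
  · simp [B]
  · simp [B, α1]
  · decide
  · simp [B, α1]
  · decide
end

section
/- One has r₀·α₁ = α₁ + 2α₀ and (r₋₁r₀)·α₁ = α₁ + 2α₀ + 2α₋₁ under the action A·N = A N Aᵀ. The three elements β₁ = α₁, β₂ = α₁ + 2α₀, β₃ = α₁ + 2α₀ + 2α₋₁ are positive real roots of F, each pairwise difference βᵢ − βⱼ (i ≠ j) has determinant −4 and hence does not lie in Φ, and the Gram matrix [B(βᵢ,βⱼ)] equals [[2,−2,−2],[−2,2,−2],[−2,−2,2]]. (These are the simple-root data of a rank 3 hyperbolic subalgebra of F with Weyl group T(∞,∞,∞).) -/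
open Matrix

/-- The matrix `r₋₁` of the simple reflection in `α₋₁`. -/
def rm : Matrix (Fin 2) (Fin 2) ℤ := !![0, 1; 1, 0]

/-- The matrix `r₀` of the simple reflection in `α₀`. -/
def r0 : Matrix (Fin 2) (Fin 2) ℤ := !![-1, 1; 0, 1]

/-- `r₀·α₁ = α₁ + 2α₀` and `(r₋₁r₀)·α₁ = α₁ + 2α₀ + 2α₋₁`; the roots `β₁ = α₁`,
`β₂ = α₁ + 2α₀`, `β₃ = α₁ + 2α₀ + 2α₋₁` are positive real roots of `F`, each pairwise
difference has determinant `-4` and is not in `Φ`, and the Gram matrix is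
`[[2,-2,-2],[-2,2,-2],[-2,-2,2]]`: simple-root data of a rank 3 hyperbolic subalgebra
of `F` with Weyl group `T(∞,∞,∞)`. -/
theorem stmt_12 (β₁ β₂ β₃ : Matrix (Fin 2) (Fin 2) ℤ)
    (hβ₁ : β₁ = α1) (hβ₂ : β₂ = α1 + 2 • α0) (hβ₃ : β₃ = α1 + 2 • α0 + 2 • αm) :
    r0 * α1 * r0ᵀ = β₂ ∧ (rm * r0) * α1 * (rm * r0)ᵀ = β₃ ∧
    IsPositiveRealRoot β₁ ∧ IsPositiveRealRoot β₂ ∧ IsPositiveRealRoot β₃ ∧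
    (β₁ - β₂).det = -4 ∧ (β₂ - β₁).det = -4 ∧ (β₁ - β₃).det = -4 ∧
    (β₃ - β₁).det = -4 ∧ (β₂ - β₃).det = -4 ∧ (β₃ - β₂).det = -4 ∧
    β₁ - β₂ ∉ Phi ∧ β₂ - β₁ ∉ Phi ∧ β₁ - β₃ ∉ Phi ∧
    β₃ - β₁ ∉ Phi ∧ β₂ - β₃ ∉ Phi ∧ β₃ - β₂ ∉ Phi ∧
    B β₁ β₁ = 2 ∧ B β₁ β₂ = -2 ∧ B β₁ β₃ = -2 ∧
    B β₂ β₁ = -2 ∧ B β₂ β₂ = 2 ∧ B β₂ β₃ = -2 ∧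
    B β₃ β₁ = -2 ∧ B β₃ β₂ = -2 ∧ B β₃ β₃ = 2 := by
  subst hβ₁ hβ₂ hβ₃
  have e2 : α1 + 2 • α0 = !![-2,-1;-1,0] := by
    ext i j; fin_cases i <;> fin_cases j <;> norm_num [α1, α0]
  have e3 : α1 + 2 • α0 + 2 • αm = !![0,-1;-1,-2] := by
    ext i j; fin_cases i <;> fin_cases j <;> norm_num [α1, α0, αm]
  rw [e3, e2]
  have d12 : (α1 - !![-2,-1;-1,0] : Matrix (Fin 2) (Fin 2) ℤ) = !![2,2;2,0] := by
    ext i j; fin_cases i <;> fin_cases j <;> norm_num [α1]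
  have d21 : (!![-2,-1;-1,0] - α1 : Matrix (Fin 2) (Fin 2) ℤ) = !![-2,-2;-2,0] := by
    ext i j; fin_cases i <;> fin_cases j <;> norm_num [α1]
  have d13 : (α1 - !![0,-1;-1,-2] : Matrix (Fin 2) (Fin 2) ℤ) = !![0,2;2,2] := by
    ext i j; fin_cases i <;> fin_cases j <;> norm_num [α1]
  have d31 : (!![0,-1;-1,-2] - α1 : Matrix (Fin 2) (Fin 2) ℤ) = !![0,-2;-2,-2] := by
    ext i j; fin_cases i <;> fin_cases j <;> norm_num [α1]
  have d23 : (!![-2,-1;-1,0] - !![0,-1;-1,-2] : Matrix (Fin 2) (Fin 2) ℤ) = !![-2,0;0,2] := by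
    ext i j; fin_cases i <;> fin_cases j <;> norm_num
  have d32 : (!![0,-1;-1,-2] - !![-2,-1;-1,0] : Matrix (Fin 2) (Fin 2) ℤ) = !![2,0;0,-2] := by
    ext i j; fin_cases i <;> fin_cases j <;> norm_num
  refine ⟨?_, ?_, ⟨⟨?_, 0, 0, 1, ?_⟩, ?_⟩, ⟨⟨?_, 0, 2, 1, ?_⟩, ?_⟩, ⟨⟨?_, 2, 2, 1, ?_⟩, ?_⟩,
    ?_, ?_, ?_, ?_, ?_, ?_, ?_, ?_, ?_, ?_, ?_, ?_, ?_, ?_, ?_, ?_, ?_, ?_, ?_, ?_, ?_⟩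
  · ext i j; fin_cases i <;> fin_cases j <;>
      norm_num [r0, α1, Matrix.mul_apply, Fin.sum_univ_two, Matrix.transpose_apply, Matrix.vecHead, Matrix.vecTail]
  · ext i j; fin_cases i <;> fin_cases j <;>
      norm_num [r0, rm, α1, Matrix.mul_apply, Fin.sum_univ_two, Matrix.transpose_apply, Matrix.vecHead, Matrix.vecTail]
  · intro h; simpa [α1] using congrFun (congrFun h 0) 1
  · ext i j; fin_cases i <;> fin_cases j <;> norm_num [α1, α0, αm]
  · norm_num [α1, Matrix.det_fin_two_of]
  · intro h; simpa using congrFun (congrFun h 0) 0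
  · ext i j; fin_cases i <;> fin_cases j <;> norm_num [α1, α0, αm]
  · norm_num [Matrix.det_fin_two_of]
  · intro h; simpa using congrFun (congrFun h 1) 1
  · ext i j; fin_cases i <;> fin_cases j <;> norm_num [α1, α0, αm]
  · norm_num [Matrix.det_fin_two_of]
  · rw [d12]; norm_num [Matrix.det_fin_two_of]
  · rw [d21]; norm_num [Matrix.det_fin_two_of]
  · rw [d13]; norm_num [Matrix.det_fin_two_of]
  · rw [d31]; norm_num [Matrix.det_fin_two_of]
  · rw [d23]; norm_num [Matrix.det_fin_two_of]
  · rw [d32]; norm_num [Matrix.det_fin_two_of]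
  · rw [d12]; rintro ⟨-, -, h⟩; norm_num [Matrix.det_fin_two_of] at h
  · rw [d21]; rintro ⟨-, -, h⟩; norm_num [Matrix.det_fin_two_of] at h
  · rw [d13]; rintro ⟨-, -, h⟩; norm_num [Matrix.det_fin_two_of] at h
  · rw [d31]; rintro ⟨-, -, h⟩; norm_num [Matrix.det_fin_two_of] at h
  · rw [d23]; rintro ⟨-, -, h⟩; norm_num [Matrix.det_fin_two_of] at h
  · rw [d32]; rintro ⟨-, -, h⟩; norm_num [Matrix.det_fin_two_of] at h
  all_goals norm_num [B, α1]
end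

section
/- The three elements β₁ = α₁, β₂ = 3α₁ + 6α₀ + 2α₋₁ = [[−4,−3],[−3,−2]], β₃ = 3α₁ + 6α₀ + 4α₋₁ = [[−2,−3],[−3,−4]] are positive real roots of F, each pairwise difference βᵢ − βⱼ (i ≠ j) has determinant < −1 and hence does not lie in Φ, and the Gram matrix [B(βᵢ,βⱼ)] equals [[2,−6,−6],[−6,2,−2],[−6,−2,2]]. (These are the simple-root data of a rank 3 indefinite Kac–Moody subalgebra of F whose Weyl group T(∞,∞,∞) has infinite index in the Weyl group of F.) -/
open Matrix

/-- The roots `β₁ = α₁`, `β₂ = 3α₁+6α₀+2α₋₁ = [[-4,-3],[-3,-2]]`,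
`β₃ = 3α₁+6α₀+4α₋₁ = [[-2,-3],[-3,-4]]` are positive real roots of `F`, each pairwise
difference has determinant `< -1` and is not in `Φ`, and the Gram matrix is
`[[2,-6,-6],[-6,2,-2],[-6,-2,2]]`: simple-root data of a rank 3 indefinite
Kac–Moody subalgebra of `F` whose Weyl group `T(∞,∞,∞)` has infinite index in the
Weyl group of `F`. -/
theorem stmt_15 (β₁ β₂ β₃ : Matrix (Fin 2) (Fin 2) ℤ)
    (hβ₁ : β₁ = α1) (hβ₂ : β₂ = 3 • α1 + 6 • α0 + 2 • αm)
    (hβ₃ : β₃ = 3 • α1 + 6 • α0 + 4 • αm) :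
    β₂ = !![-4, -3; -3, -2] ∧ β₃ = !![-2, -3; -3, -4] ∧
    IsPositiveRealRoot β₁ ∧ IsPositiveRealRoot β₂ ∧ IsPositiveRealRoot β₃ ∧
    (β₁ - β₂).det < -1 ∧ (β₂ - β₁).det < -1 ∧ (β₁ - β₃).det < -1 ∧
    (β₃ - β₁).det < -1 ∧ (β₂ - β₃).det < -1 ∧ (β₃ - β₂).det < -1 ∧
    β₁ - β₂ ∉ Phi ∧ β₂ - β₁ ∉ Phi ∧ β₁ - β₃ ∉ Phi ∧
    β₃ - β₁ ∉ Phi ∧ β₂ - β₃ ∉ Phi ∧ β₃ - β₂ ∉ Phi ∧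
    B β₁ β₁ = 2 ∧ B β₁ β₂ = -6 ∧ B β₁ β₃ = -6 ∧
    B β₂ β₁ = -6 ∧ B β₂ β₂ = 2 ∧ B β₂ β₃ = -2 ∧
    B β₃ β₁ = -6 ∧ B β₃ β₂ = -2 ∧ B β₃ β₃ = 2 := by
  subst hβ₁ hβ₂ hβ₃
  have h2 : (3 • α1 + 6 • α0 + 2 • αm : Matrix (Fin 2) (Fin 2) ℤ) = !![-4,-3;-3,-2] := by
    ext i j; fin_cases i <;> fin_cases j <;> simp [α1, α0, αm]
  have h3 : (3 • α1 + 6 • α0 + 4 • αm : Matrix (Fin 2) (Fin 2) ℤ) = !![-2,-3;-3,-4] := by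
    ext i j; fin_cases i <;> fin_cases j <;> simp [α1, α0, αm]
  have notPhi : ∀ N : Matrix (Fin 2) (Fin 2) ℤ, N.det < -1 → N ∉ Phi := by
    rintro N h ⟨-, -, hle⟩; omega
  have ne1 : α1 ≠ 0 := by
    intro h; simpa [α1] using congrFun (congrFun h 0) 1
  have ne2 : (!![-4,-3;-3,-2] : Matrix (Fin 2) (Fin 2) ℤ) ≠ 0 := by
    intro h; simpa using congrFun (congrFun h 0) 1
  have ne3 : (!![-2,-3;-3,-4] : Matrix (Fin 2) (Fin 2) ℤ) ≠ 0 := by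
    intro h; simpa using congrFun (congrFun h 0) 1
  rw [h2, h3]
  refine ⟨rfl, rfl,
    ⟨⟨ne1, 0, 0, 1, by ext i j; fin_cases i <;> fin_cases j <;> norm_num [α1, α0, αm]⟩,
      by norm_num [α1, Matrix.det_fin_two]⟩,
    ⟨⟨ne2, 2, 6, 3, by ext i j; fin_cases i <;> fin_cases j <;> norm_num [α1, α0, αm]⟩,
      by norm_num [Matrix.det_fin_two]⟩,
    ⟨⟨ne3, 4, 6, 3, by ext i j; fin_cases i <;> fin_cases j <;> norm_num [α1, α0, αm]⟩,
      by norm_num [Matrix.det_fin_two]⟩,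
    by norm_num [Matrix.det_fin_two, Matrix.sub_apply, α1],
    by norm_num [Matrix.det_fin_two, Matrix.sub_apply, α1],
    by norm_num [Matrix.det_fin_two, Matrix.sub_apply, α1],
    by norm_num [Matrix.det_fin_two, Matrix.sub_apply, α1],
    by norm_num [Matrix.det_fin_two, Matrix.sub_apply, α1],
    by norm_num [Matrix.det_fin_two, Matrix.sub_apply, α1],
    notPhi _ (by norm_num [Matrix.det_fin_two, Matrix.sub_apply, α1]),
    notPhi _ (by norm_num [Matrix.det_fin_two, Matrix.sub_apply, α1]),
    notPhi _ (by norm_num [Matrix.det_fin_two, Matrix.sub_apply, α1]),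
    notPhi _ (by norm_num [Matrix.det_fin_two, Matrix.sub_apply, α1]),
    notPhi _ (by norm_num [Matrix.det_fin_two, Matrix.sub_apply, α1]),
    notPhi _ (by norm_num [Matrix.det_fin_two, Matrix.sub_apply, α1]),
    by norm_num [B, α1], by norm_num [B, α1], by norm_num [B, α1],
    by norm_num [B, α1], by norm_num [B, α1], by norm_num [B, α1],
    by norm_num [B, α1], by norm_num [B, α1], by norm_num [B, α1]⟩
end

section
/- The three elements β₁ = α₀ + α₋₁ = [[0,−1],[−1,−1]], β₂ = 2α₁ + α₀ = [[−1,1],[1,0]], β₃ = 3α₁ + 4α₀ = [[−4,−1],[−1,0]] are positive real roots of F, each pairwise difference βᵢ − βⱼ (i ≠ j) has determinant < −1 and hence does not lie in Φ, and the Gram matrix [B(βᵢ,βⱼ)] equals [[2,−3,−2],[−3,2,−2],[−2,−2,2]]. (These are the simple-root data of a rank 3 indefinite Kac–Moody subalgebra of F whose Weyl group T(∞,∞,∞) has infinite index in the Weyl group of F.) -/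
open Matrix

/-- The roots `β₁ = α₀+α₋₁ = [[0,-1],[-1,-1]]`, `β₂ = 2α₁+α₀ = [[-1,1],[1,0]]`,
`β₃ = 3α₁+4α₀ = [[-4,-1],[-1,0]]` are positive real roots of `F`, each pairwise
difference has determinant `< -1` and is not in `Φ`, and the Gram matrix is
`[[2,-3,-2],[-3,2,-2],[-2,-2,2]]`: simple-root data of a rank 3 indefinite
Kac–Moody subalgebra of `F` whose Weyl group `T(∞,∞,∞)` has infinite index in the
Weyl group of `F`. -/
theorem stmt_16 (β₁ β₂ β₃ : Matrix (Fin 2) (Fin 2) ℤ)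
    (hβ₁ : β₁ = α0 + αm) (hβ₂ : β₂ = 2 • α1 + α0)
    (hβ₃ : β₃ = 3 • α1 + 4 • α0) :
    β₁ = !![0, -1; -1, -1] ∧ β₂ = !![-1, 1; 1, 0] ∧ β₃ = !![-4, -1; -1, 0] ∧
    IsPositiveRealRoot β₁ ∧ IsPositiveRealRoot β₂ ∧ IsPositiveRealRoot β₃ ∧
    (β₁ - β₂).det < -1 ∧ (β₂ - β₁).det < -1 ∧ (β₁ - β₃).det < -1 ∧
    (β₃ - β₁).det < -1 ∧ (β₂ - β₃).det < -1 ∧ (β₃ - β₂).det < -1 ∧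
    β₁ - β₂ ∉ Phi ∧ β₂ - β₁ ∉ Phi ∧ β₁ - β₃ ∉ Phi ∧
    β₃ - β₁ ∉ Phi ∧ β₂ - β₃ ∉ Phi ∧ β₃ - β₂ ∉ Phi ∧
    B β₁ β₁ = 2 ∧ B β₁ β₂ = -3 ∧ B β₁ β₃ = -2 ∧
    B β₂ β₁ = -3 ∧ B β₂ β₂ = 2 ∧ B β₂ β₃ = -2 ∧
    B β₃ β₁ = -2 ∧ B β₃ β₂ = -2 ∧ B β₃ β₃ = 2 := by
  subst hβ₁ hβ₂ hβ₃
  have e1 : α0 + αm = !![0, -1; -1, -1] := by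
    ext i j; fin_cases i <;> fin_cases j <;> simp [α0, αm]
  have e2 : 2 • α1 + α0 = !![-1, 1; 1, 0] := by
    ext i j; fin_cases i <;> fin_cases j <;> simp [α0, α1]
  have e3 : 3 • α1 + 4 • α0 = !![-4, -1; -1, 0] := by
    ext i j; fin_cases i <;> fin_cases j <;> simp [α0, α1]
  rw [e1, e2, e3]
  have n1 : (!![0, -1; -1, -1] : Matrix (Fin 2) (Fin 2) ℤ) ≠ 0 := by
    intro h; have := congrFun (congrFun h 1) 1; simp at this
  have n2 : (!![-1, 1; 1, 0] : Matrix (Fin 2) (Fin 2) ℤ) ≠ 0 := by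
    intro h; have := congrFun (congrFun h 0) 0; simp at this
  have n3 : (!![-4, -1; -1, 0] : Matrix (Fin 2) (Fin 2) ℤ) ≠ 0 := by
    intro h; have := congrFun (congrFun h 0) 0; simp at this
  refine ⟨rfl, rfl, rfl,
    ⟨⟨n1, 1, 1, 0, ?_⟩, ?_⟩, ⟨⟨n2, 0, 1, 2, ?_⟩, ?_⟩, ⟨⟨n3, 0, 4, 3, ?_⟩, ?_⟩,
    ?_, ?_, ?_, ?_, ?_, ?_,
    ?_, ?_, ?_, ?_, ?_, ?_,
    ?_, ?_, ?_, ?_, ?_, ?_, ?_, ?_, ?_⟩ <;>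
  first
  | (rintro ⟨-, -, hd⟩; norm_num [Matrix.det_fin_two, Matrix.sub_apply] at hd; done)
  | (norm_num [B]; done)
  | (norm_num [Matrix.det_fin_two, Matrix.sub_apply]; done)
  | (ext i j; fin_cases i <;> fin_cases j <;> simp [α0, α1, αm]; done)
end

section
/- The four elements β₁ = α₀ + α₋₁ = [[0,−1],[−1,−1]], β₂ = 3α₁ + 2α₀ + 2α₋₁ = [[0,1],[1,−2]], β₃ = 3α₁ + 2α₀ = [[−2,1],[1,0]], β₄ = 3α₁ + 4α₀ = [[−4,−1],[−1,0]] are positive real roots of F, each pairwise difference βᵢ − βⱼ (i ≠ j) has determinant < −1 and hence does not lie in Φ, the Gram matrix [B(βᵢ,βⱼ)] equals [[2,−2,−4,−2],[−2,2,−2,−10],[−4,−2,2,−2],[−2,−10,−2,2]], and the four roots satisfy the linear dependence 2β₁ − β₂ + 2β₃ − β₄ = 0. -/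
open Matrix

/-- The four roots `β₁ = α₀+α₋₁ = [[0,-1],[-1,-1]]`, `β₂ = 3α₁+2α₀+2α₋₁ =
[[0,1],[1,-2]]`, `β₃ = 3α₁+2α₀ = [[-2,1],[1,0]]`, `β₄ = 3α₁+4α₀ = [[-4,-1],[-1,0]]`
are positive real roots of `F`, each pairwise difference has determinant `< -1` and is
not in `Φ`, the Gram matrix is `[[2,-2,-4,-2],[-2,2,-2,-10],[-4,-2,2,-2],
[-2,-10,-2,2]]`, and they satisfy the linear dependence `2β₁ - β₂ + 2β₃ - β₄ = 0`. -/
theorem stmt_17 (β₁ β₂ β₃ β₄ : Matrix (Fin 2) (Fin 2) ℤ)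
    (hβ₁ : β₁ = α0 + αm) (hβ₂ : β₂ = 3 • α1 + 2 • α0 + 2 • αm)
    (hβ₃ : β₃ = 3 • α1 + 2 • α0) (hβ₄ : β₄ = 3 • α1 + 4 • α0) :
    β₁ = !![0, -1; -1, -1] ∧ β₂ = !![0, 1; 1, -2] ∧
    β₃ = !![-2, 1; 1, 0] ∧ β₄ = !![-4, -1; -1, 0] ∧
    IsPositiveRealRoot β₁ ∧ IsPositiveRealRoot β₂ ∧
    IsPositiveRealRoot β₃ ∧ IsPositiveRealRoot β₄ ∧
    (β₁ - β₂).det < -1 ∧ (β₁ - β₃).det < -1 ∧ (β₁ - β₄).det < -1 ∧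
    (β₂ - β₃).det < -1 ∧ (β₂ - β₄).det < -1 ∧ (β₃ - β₄).det < -1 ∧
    β₁ - β₂ ∉ Phi ∧ β₂ - β₁ ∉ Phi ∧ β₁ - β₃ ∉ Phi ∧ β₃ - β₁ ∉ Phi ∧
    β₁ - β₄ ∉ Phi ∧ β₄ - β₁ ∉ Phi ∧ β₂ - β₃ ∉ Phi ∧ β₃ - β₂ ∉ Phi ∧
    β₂ - β₄ ∉ Phi ∧ β₄ - β₂ ∉ Phi ∧ β₃ - β₄ ∉ Phi ∧ β₄ - β₃ ∉ Phi ∧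
    B β₁ β₁ = 2 ∧ B β₁ β₂ = -2 ∧ B β₁ β₃ = -4 ∧ B β₁ β₄ = -2 ∧
    B β₂ β₁ = -2 ∧ B β₂ β₂ = 2 ∧ B β₂ β₃ = -2 ∧ B β₂ β₄ = -10 ∧
    B β₃ β₁ = -4 ∧ B β₃ β₂ = -2 ∧ B β₃ β₃ = 2 ∧ B β₃ β₄ = -2 ∧
    B β₄ β₁ = -2 ∧ B β₄ β₂ = -10 ∧ B β₄ β₃ = -2 ∧ B β₄ β₄ = 2 ∧
    2 • β₁ - β₂ + 2 • β₃ - β₄ = 0 := by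

  subst hβ₁ hβ₂ hβ₃ hβ₄
  have e1 : α0 + αm = !![0, -1; -1, -1] := by
    ext i j; fin_cases i <;> fin_cases j <;> simp [αm, α0, α1]
  have e2 : 3 • α1 + 2 • α0 + 2 • αm = !![0, 1; 1, -2] := by
    ext i j; fin_cases i <;> fin_cases j <;> simp [αm, α0, α1]
  have e3 : 3 • α1 + 2 • α0 = !![-2, 1; 1, 0] := by
    ext i j; fin_cases i <;> fin_cases j <;> simp [αm, α0, α1]
  have e4 : 3 • α1 + 4 • α0 = !![-4, -1; -1, 0] := by
    ext i j; fin_cases i <;> fin_cases j <;> simp [αm, α0, α1]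
  rw [e1, e2, e3, e4]
  have nz : ∀ a b c d : ℤ, b ≠ 0 → (!![a, b; c, d] : Matrix (Fin 2) (Fin 2) ℤ) ≠ 0 := by
    intro a b c d hb h
    have := congrFun (congrFun h 0) 1
    simp at this; exact hb this
  refine ⟨rfl, rfl, rfl, rfl, ?_, ?_, ?_, ?_, ?_⟩
  · exact ⟨⟨nz _ _ _ _ (by norm_num), 1, 1, 0, by rw [← e1]; push_cast; module⟩,
      by simp [Matrix.det_fin_two_of]⟩
  · exact ⟨⟨nz _ _ _ _ (by norm_num), 2, 2, 3, by rw [← e2]; push_cast; module⟩,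
      by simp [Matrix.det_fin_two_of]⟩
  · exact ⟨⟨nz _ _ _ _ (by norm_num), 0, 2, 3, by rw [← e3]; push_cast; module⟩,
      by simp [Matrix.det_fin_two_of]⟩
  · exact ⟨⟨nz _ _ _ _ (by norm_num), 0, 4, 3, by rw [← e4]; push_cast; module⟩,
      by simp [Matrix.det_fin_two_of]⟩
  have hd : ∀ a b c d : ℤ, (!![a, b; c, d] : Matrix (Fin 2) (Fin 2) ℤ).det = a * d - b * c := by
    intro a b c d; simp [Matrix.det_fin_two_of]
  have hsub : ∀ a b c d a' b' c' d' : ℤ,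
      (!![a, b; c, d] : Matrix (Fin 2) (Fin 2) ℤ) - !![a', b'; c', d'] =
        !![a - a', b - b'; c - c', d - d'] := by
    intro a b c d a' b' c' d'
    ext i j; fin_cases i <;> fin_cases j <;> simp
  have hPhi : ∀ a b c d : ℤ, a * d - b * c < -1 →
      (!![a, b; c, d] : Matrix (Fin 2) (Fin 2) ℤ) ∉ Phi := by
    rintro a b c d h ⟨_, _, hdet⟩
    rw [hd] at hdet; omega
  simp only [hsub]
  refine ⟨by rw [hd]; norm_num, by rw [hd]; norm_num, by rw [hd]; norm_num,
    by rw [hd]; norm_num, by rw [hd]; norm_num, by rw [hd]; norm_num,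
    hPhi _ _ _ _ (by norm_num), hPhi _ _ _ _ (by norm_num), hPhi _ _ _ _ (by norm_num),
    hPhi _ _ _ _ (by norm_num), hPhi _ _ _ _ (by norm_num), hPhi _ _ _ _ (by norm_num),
    hPhi _ _ _ _ (by norm_num), hPhi _ _ _ _ (by norm_num), hPhi _ _ _ _ (by norm_num),
    hPhi _ _ _ _ (by norm_num), hPhi _ _ _ _ (by norm_num), hPhi _ _ _ _ (by norm_num),
    ?_, ?_, ?_, ?_, ?_, ?_, ?_, ?_, ?_, ?_, ?_, ?_, ?_, ?_, ?_, ?_, ?_⟩ <;>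
    norm_num [B]
end
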